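/- In dimension d = 3, the Nambu-determinant bracket {f,g} = ρ·⟨∇f, ∇g × ∇a⟩ satisfies the Jacobi identity {f,{g,h}} + {g,{h,f}} + {h,{f,g}} = 0 for all smooth f, g, h : ℝ³ → ℝ and all smooth ρ, a : ℝ³ → ℝ. -/

import Mathlib

noncomputable def pd {n : ℕ} (i : Fin n) (f : (Fin n → ℝ) → ℝ) (x : Fin n → ℝ) : ℝ :=
  fderiv ℝ f x (Pi.single i 1)

noncomputable def grad {n : ℕ} (f : (Fin n → ℝ) → ℝ) (x : Fin n → ℝ) : Fin n → ℝ :=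
  fun i => pd i f x

/-- The 3D Nambu bracket {f,g} = ρ·det(∇f,∇g,∇a) = ρ·⟨∇f, ∇g × ∇a⟩. -/
noncomputable def br3 (ρ a f g : (Fin 3 → ℝ) → ℝ) (x : Fin 3 → ℝ) : ℝ :=
  ρ x * (Matrix.of ![grad f x, grad g x, grad a x]).det

lemma pd_smooth {n : ℕ} {f : (Fin n → ℝ) → ℝ} (hf : ContDiff ℝ (⊤ : ℕ∞) f) (i : Fin n) :
    ContDiff ℝ (⊤ : ℕ∞) (pd i f) := by
  unfold pd
  exact (ContinuousLinearMap.apply ℝ ℝ (Pi.single i 1)).contDiff.comp (hf.fderiv_right (m := ((⊤ : ℕ∞) : WithTop ℕ∞)) (by norm_cast))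

lemma pd_mul {n : ℕ} {F G : (Fin n → ℝ) → ℝ} {x : Fin n → ℝ} (i : Fin n)
    (hF : DifferentiableAt ℝ F x) (hG : DifferentiableAt ℝ G x) :
    pd i (fun y => F y * G y) x = pd i F x * G x + F x * pd i G x := by
  unfold pd
  rw [fderiv_fun_mul hF hG]
  simp; ring

lemma pd_add {n : ℕ} {F G : (Fin n → ℝ) → ℝ} {x : Fin n → ℝ} (i : Fin n)
    (hF : DifferentiableAt ℝ F x) (hG : DifferentiableAt ℝ G x) :
    pd i (fun y => F y + G y) x = pd i F x + pd i G x := by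
  unfold pd
  rw [fderiv_fun_add hF hG]; simp

lemma pd_sub {n : ℕ} {F G : (Fin n → ℝ) → ℝ} {x : Fin n → ℝ} (i : Fin n)
    (hF : DifferentiableAt ℝ F x) (hG : DifferentiableAt ℝ G x) :
    pd i (fun y => F y - G y) x = pd i F x - pd i G x := by
  unfold pd
  rw [fderiv_fun_sub hF hG]; simp

lemma pd_comm {n : ℕ} {f : (Fin n → ℝ) → ℝ} (hf : ContDiff ℝ (⊤ : ℕ∞) f) (i j : Fin n) (x : Fin n → ℝ) :
    pd i (pd j f) x = pd j (pd i f) x := by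
  have hs : IsSymmSndFDerivAt ℝ f x := (hf.contDiffAt).isSymmSndFDerivAt (by rw [minSmoothness_of_isRCLikeNormedField]; norm_cast)
  have hd : DifferentiableAt ℝ (fderiv ℝ f) x :=
    ((hf.fderiv_right (m := 1) ((by norm_cast))).differentiable (by simp)).differentiableAt
  have key : ∀ k l : Fin n, pd k (pd l f) x
      = fderiv ℝ (fderiv ℝ f) x (Pi.single k 1) (Pi.single l 1) := by
    intro k l
    show fderiv ℝ (fun y => (fderiv ℝ f y) (Pi.single l 1)) x (Pi.single k 1) = _
    rw [fderiv_clm_apply hd (differentiableAt_const _)]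
    simp
  rw [key, key, hs.eq]

lemma br3_eq (ρ a f g : (Fin 3 → ℝ) → ℝ) :
    br3 ρ a f g = fun x =>
      ρ x * (pd 0 f x * (pd 1 g x * pd 2 a x - pd 2 g x * pd 1 a x)
           - pd 1 f x * (pd 0 g x * pd 2 a x - pd 2 g x * pd 0 a x)
           + pd 2 f x * (pd 0 g x * pd 1 a x - pd 1 g x * pd 0 a x)) := by
  funext x
  unfold br3 grad
  rw [Matrix.det_fin_three]
  simp only [Matrix.of_apply, Matrix.cons_val', Matrix.cons_val_zero, Matrix.cons_val_one,
    Matrix.head_cons, Matrix.empty_val', Matrix.cons_val_fin_one, Matrix.head_fin_const,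
    Matrix.cons_val_two, Matrix.tail_cons]
  ring

set_option maxHeartbeats 4000000 in
theorem jacobi_3d (ρ a : (Fin 3 → ℝ) → ℝ)
    (hρ : ContDiff ℝ (⊤ : ℕ∞) ρ) (ha : ContDiff ℝ (⊤ : ℕ∞) a)
    (f g h : (Fin 3 → ℝ) → ℝ)
    (hf : ContDiff ℝ (⊤ : ℕ∞) f) (hg : ContDiff ℝ (⊤ : ℕ∞) g) (hh : ContDiff ℝ (⊤ : ℕ∞) h)
    (x : Fin 3 → ℝ) :
    br3 ρ a f (br3 ρ a g h) x + br3 ρ a g (br3 ρ a h f) x + br3 ρ a h (br3 ρ a f g) x = 0 := by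
  have dρ : Differentiable ℝ ρ := hρ.differentiable (by simp)
  have da : Differentiable ℝ a := ha.differentiable (by simp)
  have df : Differentiable ℝ f := hf.differentiable (by simp)
  have dg : Differentiable ℝ g := hg.differentiable (by simp)
  have dh : Differentiable ℝ h := hh.differentiable (by simp)
  have dpa : ∀ i, Differentiable ℝ (pd i a) := fun i => (pd_smooth ha i).differentiable (by simp)
  have dpf : ∀ i, Differentiable ℝ (pd i f) := fun i => (pd_smooth hf i).differentiable (by simp)
  have dpg : ∀ i, Differentiable ℝ (pd i g) := fun i => (pd_smooth hg i).differentiable (by simp)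
  have dph : ∀ i, Differentiable ℝ (pd i h) := fun i => (pd_smooth hh i).differentiable (by simp)
  have e1 := congrFun (br3_eq ρ a f (br3 ρ a g h)) x
  have e2 := congrFun (br3_eq ρ a g (br3 ρ a h f)) x
  have e3 := congrFun (br3_eq ρ a h (br3 ρ a f g)) x
  rw [e1, e2, e3, br3_eq ρ a g h, br3_eq ρ a h f, br3_eq ρ a f g]
  have da0 := dpa 0; have da1 := dpa 1; have da2 := dpa 2
  have df0 := dpf 0; have df1 := dpf 1; have df2 := dpf 2
  have dg0 := dpg 0; have dg1 := dpg 1; have dg2 := dpg 2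
  have dh0 := dph 0; have dh1 := dph 1; have dh2 := dph 2
  simp (disch := fun_prop) only [pd_mul, pd_sub, pd_add]
  rw [pd_comm ha 1 0 x, pd_comm ha 2 0 x, pd_comm ha 2 1 x,
      pd_comm hf 1 0 x, pd_comm hf 2 0 x, pd_comm hf 2 1 x,
      pd_comm hg 1 0 x, pd_comm hg 2 0 x, pd_comm hg 2 1 x,
      pd_comm hh 1 0 x, pd_comm hh 2 0 x, pd_comm hh 2 1 x]
  ring
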